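/- arXiv:1705.07419 — 2 statements merged into one kernel-verified Lean document; each statement's English description precedes it below -/
import Mathlib

section
/- Let G be a connected graph on n vertices with G not isomorphic to K_n, and let D_1 be the maximum vertex transmission of G. Then the distance Laplacian spectral radius satisfies ∂_1^L(G) ≥ D_1 + 2. -/
open Finset Matrix Polynomial SimpleGraph

variable {V : Type*} [Fintype V] [DecidableEq V]

/-- The distance matrix of a graph: entries are graph distances (as reals). -/
noncomputable def distMatrix (G : SimpleGraph V) : Matrix V V ℝ :=
  fun i j => (G.dist i j : ℝ)

/-- The transmission of a vertex: sum of distances to all vertices. -/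
noncomputable def transmission (G : SimpleGraph V) (i : V) : ℝ :=
  ∑ j, (G.dist i j : ℝ)

/-- The distance Laplacian matrix `L(G) = Tr(G) - D(G)`. -/
noncomputable def distLaplacian (G : SimpleGraph V) : Matrix V V ℝ :=
  Matrix.diagonal (transmission G) - distMatrix G

/-- The distance signless Laplacian matrix `Q(G) = Tr(G) + D(G)`. -/
noncomputable def distSignlessLaplacian (G : SimpleGraph V) : Matrix V V ℝ :=
  Matrix.diagonal (transmission G) + distMatrix G

/-- `μ` is an eigenvalue of the matrix `A`. -/
def IsEigOf (A : Matrix V V ℝ) (μ : ℝ) : Prop :=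
  ∃ x : V → ℝ, x ≠ 0 ∧ A.mulVec x = μ • x

/-- Largest eigenvalue (spectral radius for our PSD matrices). -/
noncomputable def maxEig (A : Matrix V V ℝ) : ℝ := sSup {μ : ℝ | IsEigOf A μ}

/-- Smallest eigenvalue. -/
noncomputable def minEig (A : Matrix V V ℝ) : ℝ := sInf {μ : ℝ | IsEigOf A μ}

/-- The Wiener index: half the sum of all pairwise distances. -/
noncomputable def wienerIndex (G : SimpleGraph V) : ℝ :=
  (1 / 2) * ∑ i, ∑ j, (G.dist i j : ℝ)

set_option linter.unusedSectionVars false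

lemma star_eq_transpose' (M : Matrix V V ℝ) : star M = Mᵀ := by
  ext i j; simp [Matrix.star_apply]

lemma exists_top_eigen [Nonempty V] {A : Matrix V V ℝ} (hA : A.IsHermitian) :
    ∃ M : ℝ, IsEigOf A M ∧ ∀ x : V → ℝ, x ⬝ᵥ A.mulVec x ≤ M * (x ⬝ᵥ x) := by
  classical
  set μ := hA.eigenvalues with hμ
  obtain ⟨i0, -, hi0⟩ := Finset.exists_mem_eq_sup' (Finset.univ_nonempty (α := V)) μ
  set M := Finset.univ.sup' Finset.univ_nonempty μ with hM
  have hcol : ∀ j, A.mulVec (⇑(hA.eigenvectorBasis j)) = μ j • ⇑(hA.eigenvectorBasis j) :=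
    hA.mulVec_eigenvectorBasis
  refine ⟨M, ⟨⇑(hA.eigenvectorBasis i0), ?_, by rw [hi0]; exact hcol i0⟩, ?_⟩
  · intro h0
    have := hA.star_eigenvectorUnitary_mulVec i0
    rw [h0] at this
    simp only [Matrix.mulVec_zero] at this
    have := congrFun this.symm i0
    simp [Pi.single_apply] at this
  · intro x
    set U : Matrix V V ℝ := (hA.eigenvectorUnitary : Matrix V V ℝ) with hU
    have hUU : U * star U = 1 := (Matrix.mem_unitaryGroup_iff).mp hA.eigenvectorUnitary.2
    have hst : star U = Uᵀ := star_eq_transpose' U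
    set y : V → ℝ := Uᵀ.mulVec x with hy
    have hAeq : A = U * Matrix.diagonal μ * star U := by
      have := hA.spectral_theorem
      simpa using this
    have hxAx : x ⬝ᵥ A.mulVec x = ∑ i, μ i * (y i * y i) := by
      rw [hAeq, hst]
      rw [← Matrix.mulVec_mulVec, ← Matrix.mulVec_mulVec]
      rw [Matrix.dotProduct_mulVec, ← Matrix.mulVec_transpose]
      simp only [← hy]
      simp [Matrix.mulVec_diagonal, dotProduct, mul_comm, mul_left_comm, mul_assoc]
    have hxx : x ⬝ᵥ x = ∑ i, y i * y i := by
      have h1 : x = U.mulVec y := by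
        rw [hy, Matrix.mulVec_mulVec, ← hst, hUU, Matrix.one_mulVec]
      calc x ⬝ᵥ x = x ⬝ᵥ U.mulVec y := by rw [← h1]
        _ = y ⬝ᵥ y := by
            rw [Matrix.dotProduct_mulVec, ← Matrix.mulVec_transpose, ← hy]
        _ = ∑ i, y i * y i := rfl
    rw [hxAx, hxx, Finset.mul_sum]
    refine Finset.sum_le_sum fun i _ => ?_
    have h1 : μ i ≤ M := Finset.le_sup' μ (Finset.mem_univ i)
    nlinarith [mul_self_nonneg (y i)]

lemma dotProduct_self_pos {x : V → ℝ} (hx : x ≠ 0) : 0 < x ⬝ᵥ x := by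
  obtain ⟨i, hi⟩ := Function.ne_iff.mp hx
  exact Finset.sum_pos' (fun j _ => mul_self_nonneg _)
    ⟨i, Finset.mem_univ i, mul_self_pos.mpr hi⟩

lemma rayleigh_le_maxEig {A : Matrix V V ℝ} (hA : A.IsHermitian) {x : V → ℝ} (hx : x ≠ 0)
    {c : ℝ} (h : c * (x ⬝ᵥ x) ≤ x ⬝ᵥ A.mulVec x) : c ≤ maxEig A := by
  have hV : Nonempty V := by
    by_contra hV
    exact hx (funext fun i => absurd ⟨i⟩ hV)
  obtain ⟨M, hMe, hbound⟩ := exists_top_eigen hA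
  have hxx := dotProduct_self_pos hx
  have hcM : c ≤ M := by nlinarith [hbound x]
  refine hcM.trans (le_csSup ⟨M, ?_⟩ hMe)
  rintro ν ⟨z, hz, hzA⟩
  have hzz := dotProduct_self_pos hz
  have hb := hbound z
  rw [hzA] at hb
  have : z ⬝ᵥ (ν • z) = ν * (z ⬝ᵥ z) := by
    simp [dotProduct, Finset.mul_sum, mul_comm, mul_left_comm]
  rw [this] at hb
  nlinarith

/-- indicator dot product with mulVec -/
lemma ind_dot_mulVec (M : Matrix V V ℝ) (A B : Finset V) :
    (fun i => if i ∈ A then (1:ℝ) else 0) ⬝ᵥ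
      M.mulVec (fun j => if j ∈ B then (1:ℝ) else 0)
    = ∑ i ∈ A, ∑ j ∈ B, M i j := by
  simp only [dotProduct, Matrix.mulVec, dotProduct, mul_ite, mul_one, mul_zero, ite_mul, one_mul,
    zero_mul, Finset.sum_ite_mem, Finset.univ_inter]

lemma ind_dot (A B : Finset V) :
    (fun i => if i ∈ A then (1:ℝ) else 0) ⬝ᵥ (fun i => if i ∈ B then (1:ℝ) else 0)
    = ((A ∩ B).card : ℝ) := by
  simp only [dotProduct, mul_ite, mul_one, mul_zero, ite_mul, one_mul, zero_mul]
  rw [Finset.sum_ite_mem, Finset.univ_inter]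
  rw [Finset.sum_ite_mem]
  rw [Finset.sum_const, nsmul_eq_mul, mul_one, Finset.inter_comm]

lemma distLaplacian_isHermitian (G : SimpleGraph V) : (distLaplacian G).IsHermitian := by
  unfold Matrix.IsHermitian
  ext i j
  simp [distLaplacian, distMatrix, Matrix.conjTranspose_apply, Matrix.diagonal_apply,
    SimpleGraph.dist_comm]
  split <;> split <;> simp_all [SimpleGraph.dist_comm]

/-- For a connected non-complete graph with maximum transmission
`D₁`, the distance Laplacian spectral radius is at least `D₁ + 2`. -/
theorem stmt7 (G : SimpleGraph V) (hG : G.Connected) (hne : G ≠ ⊤) (D1 : ℝ)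
    (hD1 : IsGreatest (Set.range (transmission G)) D1) :
    D1 + 2 ≤ maxEig (distLaplacian G) := by
  classical
  obtain ⟨⟨u0, hu0⟩, hub⟩ := hD1
  have hub' : ∀ v, transmission G v ≤ D1 := fun v => hub ⟨v, rfl⟩
  have hd1 : ∀ v w : V, v ≠ w → 1 ≤ G.dist v w := fun v w h => hG.pos_dist_of_ne h
  -- there is a vertex at distance ≥ 2 from u0
  have hSne : ∃ w, 2 ≤ G.dist u0 w := by
    by_contra hcon
    push_neg at hcon
    obtain ⟨v, w, hvw, hnadj⟩ : ∃ v w, v ≠ w ∧ ¬ G.Adj v w := by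
      by_contra hall
      push_neg at hall
      refine hne ?_
      ext v w
      simp only [SimpleGraph.top_adj]
      exact ⟨fun h => h.ne, fun h => hall v w h⟩
    have h2 : 2 ≤ G.dist v w := by
      have h1 := hd1 v w hvw
      have h3 : G.dist v w ≠ 1 := fun h => hnadj (SimpleGraph.dist_eq_one_iff_adj.mp h)
      omega
    -- transmission v ≥ card, transmission u0 ≤ card − 1
    have hv_ge : (Fintype.card V : ℝ) ≤ transmission G v := by
      have hpt : ∀ j : V, (1:ℝ) + (if j = w then 1 else 0) - (if j = v then 1 else 0)
          ≤ (G.dist v j : ℝ) := by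
        intro j
        by_cases hjv : j = v
        · subst hjv
          have : j ≠ w := hvw
          simp [this, SimpleGraph.dist_self]
        · by_cases hjw : j = w
          · subst hjw
            have : (2:ℝ) ≤ (G.dist v j : ℝ) := by exact_mod_cast h2
            simp [hjv]; linarith
          · have h1 := hd1 v j (Ne.symm hjv)
            have : (1:ℝ) ≤ (G.dist v j : ℝ) := by exact_mod_cast h1
            simp [hjv, hjw]; linarith
      have hsum : ∑ j : V, ((1:ℝ) + (if j = w then 1 else 0) - (if j = v then 1 else 0))
          = Fintype.card V := by
        rw [Finset.sum_sub_distrib, Finset.sum_add_distrib]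
        simp [Finset.card_univ]
      calc (Fintype.card V : ℝ) = _ := hsum.symm
        _ ≤ ∑ j, (G.dist v j : ℝ) := Finset.sum_le_sum fun j _ => hpt j
        _ = transmission G v := rfl
    have hu_le : transmission G u0 ≤ (Fintype.card V : ℝ) - 1 := by
      have hpt : ∀ j : V, (G.dist u0 j : ℝ) ≤ 1 - (if j = u0 then 1 else 0) := by
        intro j
        by_cases hj : j = u0
        · subst hj; simp [SimpleGraph.dist_self]
        · have := hcon j
          have : (G.dist u0 j : ℝ) ≤ 1 := by
            have h4 : G.dist u0 j ≤ 1 := by omega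
            exact_mod_cast h4
          simp [hj]; linarith
      have hsum : ∑ j : V, ((1:ℝ) - (if j = u0 then 1 else 0))
          = (Fintype.card V : ℝ) - 1 := by
        rw [Finset.sum_sub_distrib]
        simp [Finset.card_univ]
      calc transmission G u0 = ∑ j, (G.dist u0 j : ℝ) := rfl
        _ ≤ _ := Finset.sum_le_sum fun j _ => hpt j
        _ = _ := hsum
    have := hub' v
    rw [← hu0] at this
    linarith
  obtain ⟨w0, hw0⟩ := hSne
  set S : Finset V := Finset.univ.filter (fun j => 2 ≤ G.dist u0 j) with hSdef
  have hmemS : ∀ j, j ∈ S ↔ 2 ≤ G.dist u0 j := by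
    intro j; simp [hSdef]
  have hu0S : u0 ∉ S := by
    rw [hmemS]; simp [SimpleGraph.dist_self]
  have hw0S : w0 ∈ S := (hmemS w0).mpr hw0
  have hu0c : u0 ∈ Sᶜ := Finset.mem_compl.mpr hu0S
  set s : ℝ := (S.card : ℝ) with hs
  have hs1 : (1:ℝ) ≤ s := by
    have := Finset.card_pos.mpr ⟨w0, hw0S⟩
    rw [hs]; exact_mod_cast this
  set T : ℝ := ∑ j ∈ S, (G.dist u0 j : ℝ) with hT
  set C : ℝ := ∑ j ∈ S, ∑ k ∈ S, (G.dist j k : ℝ) with hC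
  set TrS : ℝ := ∑ j ∈ S, transmission G j with hTrSdef
  set a : ℝ := ((Sᶜ.card : ℝ) - 1) with ha
  have ha0 : 0 ≤ a := by
    have h1 := Finset.card_pos.mpr ⟨u0, hu0c⟩
    have h2 : (1:ℝ) ≤ (Sᶜ.card : ℝ) := by exact_mod_cast h1
    rw [ha]; linarith
  have hT2 : 2 * s ≤ T := by
    rw [hT, hs]
    calc 2 * (S.card : ℝ) = ∑ _j ∈ S, (2:ℝ) := by
          rw [Finset.sum_const, nsmul_eq_mul]; ring
      _ ≤ _ := Finset.sum_le_sum fun j hj => by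
          exact_mod_cast (hmemS j).mp hj
  have hcompl : ∀ k ∈ Sᶜ, k ≠ u0 → G.dist u0 k = 1 := by
    intro k hk hku
    have h1 : ¬ 2 ≤ G.dist u0 k := by
      have := Finset.mem_compl.mp hk
      rw [hmemS] at this; exact this
    have h2 := hd1 u0 k (Ne.symm hku)
    omega
  have hD1eq : D1 = T + a := by
    rw [← hu0]
    have h1 : transmission G u0 = ∑ j ∈ S, (G.dist u0 j : ℝ) + ∑ j ∈ Sᶜ, (G.dist u0 j : ℝ) := by
      rw [transmission, Finset.sum_add_sum_compl]
    rw [h1, ← hT]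
    congr 1
    have h2 : ∀ k ∈ Sᶜ, (G.dist u0 k : ℝ) = 1 - (if k = u0 then 1 else 0) := by
      intro k hk
      by_cases h : k = u0
      · subst h; simp [SimpleGraph.dist_self]
      · simp [h, hcompl k hk h]
    rw [Finset.sum_congr rfl h2, Finset.sum_sub_distrib]
    rw [Finset.sum_ite_eq' Sᶜ u0 (fun _ => (1:ℝ))]
    simp [hu0c, ha]
  have hTrC : T + s * a ≤ TrS - C := by
    have expand : TrS = C + ∑ j ∈ S, ∑ k ∈ Sᶜ, (G.dist j k : ℝ) := by
      rw [hTrSdef, hC, ← Finset.sum_add_distrib]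
      refine Finset.sum_congr rfl fun j _ => ?_
      rw [transmission, Finset.sum_add_sum_compl]
    have hinner : ∀ j ∈ S, a + (G.dist u0 j : ℝ) ≤ ∑ k ∈ Sᶜ, (G.dist j k : ℝ) := by
      intro j hj
      have hbd : ∀ k ∈ Sᶜ, (1:ℝ) + (if k = u0 then ((G.dist u0 j : ℝ) - 1) else 0)
          ≤ (G.dist j k : ℝ) := by
        intro k hk
        by_cases h : k = u0
        · subst h
          have hcomm : (G.dist j k : ℝ) = (G.dist k j : ℝ) := by
            rw [SimpleGraph.dist_comm]
          rw [if_pos rfl, hcomm]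
          linarith
        · have hjk : j ≠ k := by
            rintro rfl
            exact (Finset.mem_compl.mp hk) hj
          have h1 := hd1 j k hjk
          have : (1:ℝ) ≤ (G.dist j k : ℝ) := by exact_mod_cast h1
          simp [h]; linarith
      calc a + (G.dist u0 j : ℝ)
          = ∑ k ∈ Sᶜ, ((1:ℝ) + if k = u0 then ((G.dist u0 j : ℝ) - 1) else 0) := by
            rw [Finset.sum_add_distrib, Finset.sum_const, nsmul_eq_mul, mul_one]
            rw [Finset.sum_ite_eq' Sᶜ u0 (fun _ => ((G.dist u0 j : ℝ) - 1))]
            simp [hu0c, ha]; ring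
        _ ≤ _ := Finset.sum_le_sum hbd
    calc T + s * a = ∑ j ∈ S, (a + (G.dist u0 j : ℝ)) := by
          rw [Finset.sum_add_distrib, Finset.sum_const, nsmul_eq_mul, hT, hs]; ring
      _ ≤ ∑ j ∈ S, ∑ k ∈ Sᶜ, (G.dist j k : ℝ) := Finset.sum_le_sum hinner
      _ = TrS - C := by rw [expand]; ring
  -- the test vector
  set e : V → ℝ := fun i => if i ∈ ({u0} : Finset V) then (1:ℝ) else 0 with he
  set f : V → ℝ := fun i => if i ∈ S then (1:ℝ) else 0 with hf
  set x : V → ℝ := s • e - f with hx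
  have hxu0 : x u0 = s := by
    rw [hx, he, hf]
    simp [hu0S]
  have hxne : x ≠ 0 := by
    intro h
    have := congrFun h u0
    rw [hxu0] at this
    simp at this
    linarith
  set L : Matrix V V ℝ := distLaplacian G with hL
  have hLee : ∑ i ∈ ({u0} : Finset V), ∑ j ∈ ({u0} : Finset V), L i j = D1 := by
    rw [Finset.sum_singleton, Finset.sum_singleton, hL]
    simp [distLaplacian, distMatrix, SimpleGraph.dist_self, hu0]
  have hLef : ∑ i ∈ ({u0} : Finset V), ∑ j ∈ S, L i j = -T := by
    rw [Finset.sum_singleton]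
    have h1 : ∀ j ∈ S, L u0 j = -(G.dist u0 j : ℝ) := by
      intro j hj
      have : u0 ≠ j := fun h => hu0S (h ▸ hj)
      rw [hL]
      simp [distLaplacian, distMatrix, Matrix.diagonal_apply, this]
    rw [Finset.sum_congr rfl h1, hT, ← Finset.sum_neg_distrib]
  have hLfe : ∑ i ∈ S, ∑ j ∈ ({u0} : Finset V), L i j = -T := by
    have h1 : ∀ j ∈ S, L j u0 = -(G.dist u0 j : ℝ) := by
      intro j hj
      have hne2 : j ≠ u0 := fun h => hu0S (h ▸ hj)
      rw [hL]
      simp [distLaplacian, distMatrix, Matrix.diagonal_apply, hne2, SimpleGraph.dist_comm]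
    calc ∑ i ∈ S, ∑ j ∈ ({u0} : Finset V), L i j = ∑ i ∈ S, L i u0 := by
          refine Finset.sum_congr rfl fun i _ => Finset.sum_singleton _ _
      _ = -T := by rw [Finset.sum_congr rfl h1, hT, ← Finset.sum_neg_distrib]
  have hLff : ∑ i ∈ S, ∑ j ∈ S, L i j = TrS - C := by
    rw [hTrSdef, hC, ← Finset.sum_sub_distrib]
    refine Finset.sum_congr rfl fun j hj => ?_
    have h1 : ∀ k ∈ S, L j k = (if j = k then transmission G j else 0) - (G.dist j k : ℝ) := by
      intro k _
      rw [hL]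
      simp [distLaplacian, distMatrix, Matrix.diagonal_apply]
    rw [Finset.sum_congr rfl h1, Finset.sum_sub_distrib]
    congr 1
    rw [Finset.sum_ite_eq S j (fun _ => transmission G j)]
    simp [hj]
  have hxLx : x ⬝ᵥ L.mulVec x = s^2 * D1 + 2 * s * T + (TrS - C) := by
    rw [hx]
    simp only [sub_dotProduct, dotProduct_sub, smul_dotProduct,
      dotProduct_smul, Matrix.mulVec_sub, Matrix.mulVec_smul, smul_eq_mul]
    rw [he, hf]
    rw [ind_dot_mulVec, ind_dot_mulVec, ind_dot_mulVec, ind_dot_mulVec]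
    rw [hLee, hLef, hLfe, hLff]
    ring
  have hxx : x ⬝ᵥ x = s^2 + s := by
    rw [hx]
    simp only [sub_dotProduct, dotProduct_sub, smul_dotProduct,
      dotProduct_smul, smul_eq_mul]
    rw [he, hf]
    rw [ind_dot, ind_dot, ind_dot, ind_dot]
    have h1 : ({u0} : Finset V) ∩ {u0} = {u0} := by simp
    have h2 : ({u0} : Finset V) ∩ S = ∅ := by
      simp [Finset.singleton_inter_of_notMem hu0S]
    have h3 : S ∩ ({u0} : Finset V) = ∅ := by
      rw [Finset.inter_comm]; exact h2
    have h4 : S ∩ S = S := Finset.inter_self S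
    rw [h1, h2, h3, h4]
    simp [hs]
    ring
  refine rayleigh_le_maxEig (distLaplacian_isHermitian G) hxne ?_
  rw [← hL, hxx, hxLx]
  have hkey : 0 ≤ (s + 1) * (T - 2 * s) := by
    apply mul_nonneg <;> linarith
  rw [hD1eq]
  nlinarith [hkey, hTrC, hs1, ha0]
end

section
/- Let G be a connected graph on n vertices with clique number ω. If the diameter of G is at least 3, then ∂_1^L(G) > n + ⌈n/ω⌉. -/
open Finset Matrix Polynomial SimpleGraph

variable {V : Type*} [Fintype V] [DecidableEq V]

/-!
Suppose `∂₁ᴸ(G) ≤ c`. Since `L = L(G)` is positive semidefinite with spectrum in `[0, c]`, the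
matrix `c • L - L²` is positive semidefinite, and its diagonal entry at `u` gives
`Tr(u)² + ∑ⱼ d(u, j)² ≤ c · Tr(u)`. Together with `d² ≥ 3d - 2` this forces `Tr(u) < c - 1` as soon
as `c ≥ n + 1`. On the other hand, for two vertices `a, b` at distance at least `3`, every vertex
outside the closed neighbourhood of `a` is at distance at least `2` from it and `b` at distance at
least `3`, so `Tr(a) ≥ 2n - 1 - deg a`, and the closed neighbourhoods of `a` and `b` are disjoint.
For `c = n + ⌈n/ω⌉` this gives `deg a, deg b > n - ⌈n/ω⌉` and `deg a + deg b + 2 ≤ n`, which is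
impossible because `ω ≥ 2` implies `2⌈n/ω⌉ ≤ n + 1`.
-/

lemma three_mul_natCast_sub_two_le_sq (d : ℕ) : 3 * (d : ℝ) - 2 ≤ (d : ℝ) ^ 2 := by
  rcases Nat.lt_or_ge d 2 with h | h
  · interval_cases d <;> norm_num
  · have : (2 : ℝ) ≤ d := by exact_mod_cast h
    nlinarith

lemma two_mul_ceil_div_le (n : ℕ) {m : ℕ} (hm : 2 ≤ m) :
    2 * (⌈(n : ℝ) / m⌉ : ℝ) ≤ n + 1 := by
  have hdiv : (n : ℝ) / m ≤ n / 2 :=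
    div_le_div_of_nonneg_left (Nat.cast_nonneg n) two_pos (by exact_mod_cast hm)
  have hlt : 2 * (⌈(n : ℝ) / m⌉ : ℝ) < n + 2 := by linarith [Int.ceil_lt_add_one ((n : ℝ) / m)]
  have : 2 * ⌈(n : ℝ) / m⌉ < (n : ℤ) + 2 := by exact_mod_cast hlt
  exact_mod_cast (by omega : 2 * ⌈(n : ℝ) / m⌉ ≤ (n : ℤ) + 1)

lemma isEigOf_iff_mem_spectrum {A : Matrix V V ℝ} {μ : ℝ} : IsEigOf A μ ↔ μ ∈ spectrum ℝ A := by
  rw [← Matrix.spectrum_toLin', ← Module.End.hasEigenvalue_iff_mem_spectrum]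
  constructor
  · rintro ⟨x, hx, hAx⟩
    exact Module.End.hasEigenvalue_of_hasEigenvector ⟨Module.End.mem_eigenspace_iff.2 hAx, hx⟩
  · intro h
    obtain ⟨x, hx, hx0⟩ := h.exists_hasEigenvector
    exact ⟨x, hx0, Module.End.mem_eigenspace_iff.1 hx⟩

lemma le_maxEig_of_mem_spectrum {A : Matrix V V ℝ} {μ : ℝ} (h : μ ∈ spectrum ℝ A) : μ ≤ maxEig A :=
  le_csSup (A.finite_spectrum.subset fun _ => isEigOf_iff_mem_spectrum.1).bddAbove
    (isEigOf_iff_mem_spectrum.2 h)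

open scoped MatrixOrder in
lemma Matrix.PosSemidef.smul_sub_mul_self {L : Matrix V V ℝ} (hL : L.PosSemidef) {c : ℝ}
    (hc : ∀ μ ∈ spectrum ℝ L, μ ≤ c) : (c • L - L * L).PosSemidef := by
  rw [← Matrix.nonneg_iff_posSemidef] at hL ⊢
  have hcfc : cfc (fun x => c * x - x * x) L = c • L - L * L := by
    rw [cfc_sub (fun x => c * x) (fun x => x * x) L, cfc_const_mul c (fun x => x) L,
      cfc_mul (fun x => x) (fun x => x) L, cfc_id' ℝ L]
  rw [← hcfc, cfc_nonneg_iff (fun x => c * x - x * x) L]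
  intro x hx
  have := hc x hx
  have := spectrum_nonneg_of_nonneg hL hx
  nlinarith

lemma Matrix.PosSemidef.sum_sq_le_mul_diag {L : Matrix V V ℝ} (hL : L.PosSemidef) {c : ℝ}
    (hc : maxEig L ≤ c) (u : V) : ∑ j, L u j ^ 2 ≤ c * L u u := by
  have h := (hL.smul_sub_mul_self fun μ hμ => (le_maxEig_of_mem_spectrum hμ).trans hc).diag_nonneg
    (i := u)
  have hsymm : ∀ j, L j u = L u j := fun j => by
    simpa using congrFun (congrFun hL.isHermitian u) j
  simp only [sub_apply, smul_apply, smul_eq_mul, mul_apply, hsymm] at h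
  simpa [sq] using h

namespace SimpleGraph

variable (G : SimpleGraph V)

lemma distLaplacian_mulVec_apply (x : V → ℝ) (i : V) :
    (distLaplacian G *ᵥ x) i = ∑ j, (G.dist i j : ℝ) * (x i - x j) := by
  rw [distLaplacian, sub_mulVec, Pi.sub_apply, mulVec_diagonal]
  simp only [transmission, mulVec, dotProduct, distMatrix, mul_sub, Finset.sum_sub_distrib,
    Finset.sum_mul]

lemma dotProduct_distLaplacian_mulVec (x : V → ℝ) :
    x ⬝ᵥ (distLaplacian G *ᵥ x) = (∑ i, ∑ j, (G.dist i j : ℝ) * (x i - x j) ^ 2) / 2 := by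
  have hswap : ∑ i, ∑ j, (G.dist i j : ℝ) * (x i * (x i - x j))
      = ∑ i, ∑ j, (G.dist i j : ℝ) * (x j * (x j - x i)) := by
    rw [Finset.sum_comm]
    simp only [G.dist_comm]
  have hsplit : ∑ i, ∑ j, (G.dist i j : ℝ) * (x i - x j) ^ 2
      = ∑ i, ∑ j, (G.dist i j : ℝ) * (x i * (x i - x j))
        + ∑ i, ∑ j, (G.dist i j : ℝ) * (x j * (x j - x i)) := by
    simp only [← Finset.sum_add_distrib]
    congr! 2 with i _ j _
    ring
  rw [hsplit, ← hswap, add_self_div_two, dotProduct]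
  simp only [distLaplacian_mulVec_apply, Finset.mul_sum]
  exact Finset.sum_congr rfl fun i _ => Finset.sum_congr rfl fun j _ => by ring

lemma distLaplacian_posSemidef : (distLaplacian G).PosSemidef := by
  refine PosSemidef.of_dotProduct_mulVec_nonneg ?_ fun x => ?_
  · ext i j
    by_cases h : i = j
    · simp [h]
    · simp [distLaplacian, distMatrix, diagonal_apply_ne _ h, diagonal_apply_ne _ (Ne.symm h),
        G.dist_comm]
  · rw [star_trivial, dotProduct_distLaplacian_mulVec]
    positivity

lemma sum_distLaplacian_sq (u : V) :
    ∑ j, distLaplacian G u j ^ 2 = transmission G u ^ 2 + ∑ j, (G.dist u j : ℝ) ^ 2 := by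
  simp [distLaplacian, distMatrix, diagonal_apply, sub_sq, Finset.sum_add_distrib,
    Finset.sum_sub_distrib]

lemma transmission_sq_add_sum_dist_sq_le {c : ℝ} (hc : maxEig (distLaplacian G) ≤ c) (u : V) :
    transmission G u ^ 2 + ∑ j, (G.dist u j : ℝ) ^ 2 ≤ c * transmission G u := by
  have h := (distLaplacian_posSemidef G).sum_sq_le_mul_diag hc u
  rwa [sum_distLaplacian_sq, distLaplacian, Matrix.sub_apply, diagonal_apply_eq, distMatrix,
    dist_self, Nat.cast_zero, sub_zero] at h

lemma three_mul_transmission_le_sum_dist_sq (u : V) :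
    3 * transmission G u - 2 * Fintype.card V + 2 ≤ ∑ j, (G.dist u j : ℝ) ^ 2 := by
  have hpt : ∀ j, 3 * (G.dist u j : ℝ) - 2 + (if j = u then 2 else 0) ≤ (G.dist u j : ℝ) ^ 2 := by
    intro j
    split_ifs with h
    · simp [h]
    · simpa using three_mul_natCast_sub_two_le_sq (G.dist u j)
  calc 3 * transmission G u - 2 * Fintype.card V + 2
      = ∑ j, (3 * (G.dist u j : ℝ) - 2 + (if j = u then 2 else 0)) := by
        simp only [transmission, Finset.mul_sum, Finset.sum_add_distrib, Finset.sum_sub_distrib,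
          Finset.sum_const, Finset.card_univ, nsmul_eq_mul, Finset.sum_ite_eq', Finset.mem_univ,
          if_true]
        ring
    _ ≤ _ := Finset.sum_le_sum fun j _ => hpt j

lemma transmission_lt_of_maxEig_le {c : ℝ} (hc : maxEig (distLaplacian G) ≤ c)
    (hcard : Fintype.card V + 1 ≤ c) (u : V) : transmission G u < c - 1 := by
  have h1 := G.transmission_sq_add_sum_dist_sq_le hc u
  have h2 := G.three_mul_transmission_le_sum_dist_sq u
  by_contra! hT
  nlinarith [mul_nonneg (sub_nonneg.2 hT) (by linarith : 0 ≤ transmission G u - c + 3)]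

variable {G}

lemma two_mul_card_sub_one_le_transmission_add_degree [DecidableRel G.Adj] (hG : G.Connected)
    {u v : V} (huv : 3 ≤ G.dist u v) :
    2 * (Fintype.card V : ℝ) - 1 ≤ transmission G u + G.degree u := by
  have hpt : ∀ j, 2 + (if j = v then 1 else 0)
      ≤ G.dist u j + (if G.Adj u j then 1 else 0) + (if j = u then 2 else 0) := by
    intro j
    by_cases hju : j = u
    · subst hju
      have : j ≠ v := by rintro rfl; simp at huv
      simp [this]
    by_cases hadj : G.Adj u j
    · have hjv : j ≠ v := by
        rintro rfl
        rw [dist_eq_one_iff_adj.2 hadj] at huv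
        omega
      simp [hju, hjv, hadj, dist_eq_one_iff_adj.2 hadj]
    · have := hG.one_lt_dist_of_ne_of_not_adj (Ne.symm hju) hadj
      rw [if_neg hadj, if_neg hju]
      split_ifs with hjv
      · subst hjv
        omega
      · omega
  have hsum := Finset.sum_le_sum fun j (_ : j ∈ Finset.univ) => hpt j
  simp only [Finset.sum_add_distrib, Finset.sum_ite_eq', Finset.mem_univ, if_true,
    Finset.sum_boole, ← neighborFinset_eq_filter, card_neighborFinset_eq_degree, Finset.sum_const,
    Finset.card_univ, smul_eq_mul] at hsum
  have hsumℝ := (Nat.cast_le (α := ℝ)).2 hsum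
  push_cast at hsumℝ
  rw [transmission]
  linarith

lemma degree_add_degree_add_two_le_card [DecidableRel G.Adj] (hG : G.Connected) {u v : V}
    (huv : 3 ≤ G.dist u v) : G.degree u + G.degree v + 2 ≤ Fintype.card V := by
  have hdisj : Disjoint (insert u (G.neighborFinset u)) (insert v (G.neighborFinset v)) := by
    rw [Finset.disjoint_left]
    intro w hwu hwv
    rw [Finset.mem_insert, mem_neighborFinset] at hwu hwv
    have hu : G.dist u w ≤ 1 := by
      rcases hwu with rfl | h
      · simp
      · exact (dist_eq_one_iff_adj.2 h).le
    have hv : G.dist w v ≤ 1 := by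
      rcases hwv with rfl | h
      · simp
      · exact (dist_eq_one_iff_adj.2 h.symm).le
    have := hG.dist_triangle (u := u) (v := w) (w := v)
    omega
  have := (Finset.card_union_of_disjoint hdisj).symm.trans_le (Finset.card_le_univ _)
  simp only [mem_neighborFinset, SimpleGraph.irrefl, not_false_eq_true,
    Finset.card_insert_of_notMem, card_neighborFinset_eq_degree] at this
  omega

lemma Adj.two_le_cliqueNum {u v : V} (h : G.Adj u v) : 2 ≤ G.cliqueNum := by
  have hclq : G.IsClique (({u, v} : Finset V) : Set V) := by
    rw [Finset.coe_pair]
    exact isClique_pair.2 fun _ => h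
  simpa [Finset.card_pair h.ne] using hclq.card_le_cliqueNum

end SimpleGraph

/-- A connected graph on `n` vertices with clique number `ω` and
diameter at least `3` satisfies `∂₁ᴸ(G) > n + ⌈n/ω⌉`. -/
theorem stmt10 (G : SimpleGraph V) (hG : G.Connected) (hd : 3 ≤ G.diam) :
    (Fintype.card V : ℝ) + (⌈(Fintype.card V : ℝ) / (G.cliqueNum : ℝ)⌉ : ℝ) <
      maxEig (distLaplacian G) := by
  classical
  have := hG.nonempty
  obtain ⟨a, b, hab⟩ := G.exists_dist_eq_diam
  have hab3 : 3 ≤ G.dist a b := hab ▸ hd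
  have hba3 : 3 ≤ G.dist b a := G.dist_comm ▸ hab3
  have : Nontrivial V := ⟨a, b, by rintro rfl; simp at hab3⟩
  have hω : 2 ≤ G.cliqueNum :=
    (hG.preconnected.exists_adj_of_nontrivial a).choose_spec.two_le_cliqueNum
  have hk := two_mul_ceil_div_le (Fintype.card V) hω
  have hk1 : (1 : ℝ) ≤ ⌈(Fintype.card V : ℝ) / G.cliqueNum⌉ := by
    exact_mod_cast Int.one_le_ceil_iff.2
      (div_pos (Nat.cast_pos.2 Fintype.card_pos) (Nat.cast_pos.2 (by omega)))
  by_contra! hc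
  have hTa := G.transmission_lt_of_maxEig_le hc (by linarith) a
  have hTb := G.transmission_lt_of_maxEig_le hc (by linarith) b
  have hda := two_mul_card_sub_one_le_transmission_add_degree hG hab3
  have hdb := two_mul_card_sub_one_le_transmission_add_degree hG hba3
  have hdisj : ((G.degree a + G.degree b + 2 : ℕ) : ℝ) ≤ Fintype.card V := by
    exact_mod_cast degree_add_degree_add_two_le_card hG hab3
  push_cast at hdisj
  linarith
end
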